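/- arXiv:2307.12932 — 3 statements merged into one kernel-verified Lean document; each statement's English description precedes it below -/
import Mathlib

section
/- Let u : ℝ → ℝ be a concave function. If there exist a bounded function μ : [0,∞) → ℝ with μ ≥ 0 and μ(r) → 0 as r → ∞, and a constant C, such that u(s) ≥ -|s|·μ(|s|) + C for all s ∈ ℝ, then u is constant. -/
/-! A concave function lies below each of its chords extended, so if it ever strictly decreases
it drops at least linearly at `+∞`. A lower bound `-|s| μ(|s|) + C` with `μ → 0` is sublinear,
so `u` cannot decrease; applied to `s ↦ u (-s)` it cannot increase either. -/

open Set Filter Topology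

theorem ConcaveOn.monotone_of_eventually_neg_mul_le {u : ℝ → ℝ} (hu : ConcaveOn ℝ univ u)
    (hlow : ∀ ε > 0, ∀ᶠ s in atTop, -(ε * s) ≤ u s) : Monotone u := by
  intro x y hxy
  rcases hxy.eq_or_lt with rfl | hxy
  · rfl
  by_contra! hdec
  set m := (u y - u x) / (y - x)
  have hm : m < 0 := div_neg_of_neg_of_pos (by linarith) (by linarith)
  -- beyond this `z` the chord through `(x, u x)` and `(y, u y)` falls below `m z / 2`
  obtain ⟨z, hz_low, hyz, hz_far⟩ := ((hlow (-m / 2) (by linarith)).and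
    ((eventually_gt_atTop y).and (eventually_gt_atTop (2 * (u y - m * y) / -m)))).exists
  have hchord : u z ≤ u y + m * (z - y) := by
    have hslope := hu.slope_anti_adjacent (mem_univ x) (mem_univ z) hxy hyz
    rw [div_le_iff₀ (by linarith)] at hslope
    linarith
  rw [div_lt_iff₀ (by linarith)] at hz_far
  linarith

theorem eventually_neg_mul_le_neg_abs_mul_add {μ : ℝ → ℝ} (hμ : Tendsto μ atTop (𝓝 0)) (C : ℝ)
    {ε : ℝ} (hε : 0 < ε) : ∀ᶠ s in atTop, -(ε * s) ≤ -|s| * μ |s| + C := by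
  filter_upwards [hμ.eventually (ge_mem_nhds (half_pos hε)), eventually_ge_atTop 0,
    eventually_ge_atTop (-2 * C / ε)] with s hμs hs hsC
  rw [div_le_iff₀ hε] at hsC
  rw [abs_of_nonneg hs]
  nlinarith

theorem concave_one_side_decay_constant_general
    (u μ : ℝ → ℝ) (C : ℝ)
    (hu : ConcaveOn ℝ Set.univ u)
    (hμ_lim : Filter.Tendsto μ Filter.atTop (nhds 0))
    (hlow : ∀ s : ℝ, u s ≥ -|s| * μ |s| + C) :
    ∀ x y : ℝ, u x = u y := by
  have hmono_of_bound : ∀ v : ℝ → ℝ, ConcaveOn ℝ univ v →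
      (∀ s, -|s| * μ |s| + C ≤ v s) → Monotone v := fun v hv hvlow =>
    hv.monotone_of_eventually_neg_mul_le fun ε hε =>
      (eventually_neg_mul_le_neg_abs_mul_add hμ_lim C hε).mono fun s hs => hs.trans (hvlow s)
  have hmono : Monotone u := hmono_of_bound u hu hlow
  have hanti : Antitone u := by
    have hmono_neg := hmono_of_bound _ (hu.comp_linearMap (-LinearMap.id)) fun s => by
      simpa using hlow (-s)
    intro x y hxy
    simpa using hmono_neg (neg_le_neg hxy)
  intro x y
  rcases le_total x y with hxy | hyx
  · exact le_antisymm (hmono hxy) (hanti hxy)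
  · exact le_antisymm (hanti hyx) (hmono hyx)

theorem concave_one_side_decay_constant
    (u μ : ℝ → ℝ) (C : ℝ)
    (hu : ConcaveOn ℝ Set.univ u)
    (hμ_nonneg : ∀ r : ℝ, 0 ≤ r → 0 ≤ μ r)
    (hμ_bdd : ∃ B : ℝ, ∀ r : ℝ, 0 ≤ r → |μ r| ≤ B)
    (hμ_lim : Filter.Tendsto μ Filter.atTop (nhds 0))
    (hlow : ∀ s : ℝ, u s ≥ -|s| * μ |s| + C) :
    ∀ x y : ℝ, u x = u y :=
  concave_one_side_decay_constant_general u μ C hu hμ_lim hlow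
end

section
/- Let u(x,t) be defined by the Hopf–Lax formula u(x,t) = inf_{y ∈ ℝⁿ} { u₀(y) + t·L((x-y)/t) } for t > 0, where L : ℝⁿ → ℝ is semiconcave with constant 1/θ, i.e. L(q+z) + L(q-z) - 2L(q) ≤ (1/θ)|z|² for all q,z. Then u(·,t) is semiconcave with constant 1/(θt): for all x, z ∈ ℝⁿ and t > 0, u(x+z,t) + u(x-z,t) - 2u(x,t) ≤ |z|²/(θ t). -/
/-!
Each competitor `x ↦ u₀ y + t * L (t⁻¹ • (x - y))` of the Hopf–Lax formula is semiconcave with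
constant `t * (1 / θ) * t⁻¹ ^ 2 = 1 / (θ * t)`. An attained infimum of functions that are
semiconcave with a common constant is again semiconcave with that constant: testing the
infimum at `x ± z` against the minimiser for `x` bounds the second difference of `u` by that of
a single competitor.
-/

def SemiconcaveWith {E : Type*} [SeminormedAddCommGroup E] (C : ℝ) (f : E → ℝ) : Prop :=
  ∀ x z, f (x + z) + f (x - z) - 2 * f x ≤ C * ‖z‖ ^ 2

namespace SemiconcaveWith

variable {E : Type*} [SeminormedAddCommGroup E] {C : ℝ} {f : E → ℝ}

theorem const_add (hf : SemiconcaveWith C f) (b : ℝ) : SemiconcaveWith C (fun x => b + f x) :=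
  fun x z => by linarith [hf x z]

theorem const_mul (hf : SemiconcaveWith C f) {c : ℝ} (hc : 0 ≤ c) :
    SemiconcaveWith (c * C) (fun x => c * f x) := fun x z => by
  have := mul_le_mul_of_nonneg_left (hf x z) hc
  linarith

theorem comp_sub_const (hf : SemiconcaveWith C f) (y : E) :
    SemiconcaveWith C (fun x => f (x - y)) := fun x z => by
  simpa only [sub_add_eq_add_sub, sub_right_comm x z y] using hf (x - y) z

theorem comp_smul [NormedSpace ℝ E] (hf : SemiconcaveWith C f) (a : ℝ) :
    SemiconcaveWith (C * a ^ 2) (fun x => f (a • x)) := fun x z => by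
  have h := hf (a • x) (a • z)
  rw [norm_smul, Real.norm_eq_abs, mul_pow, sq_abs] at h
  simpa only [smul_add, smul_sub, mul_assoc] using h

theorem of_isLeast_range {ι : Sort*} {g : E → ι → ℝ} {u : E → ℝ}
    (hg : ∀ i, SemiconcaveWith C (g · i)) (hu : ∀ x, IsLeast (Set.range (g x)) (u x)) :
    SemiconcaveWith C u := fun x z => by
  obtain ⟨⟨i, hi⟩, -⟩ := hu x
  have hplus := (hu (x + z)).2 ⟨i, rfl⟩
  have hminus := (hu (x - z)).2 ⟨i, rfl⟩
  have := hg i x z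
  simp only at hplus hminus this
  linarith

end SemiconcaveWith

theorem hopf_lax_semiconcavity_general
    (n : ℕ) (θ : ℝ)
    (u₀ L : EuclideanSpace ℝ (Fin n) → ℝ)
    (u : EuclideanSpace ℝ (Fin n) → ℝ → ℝ)
    (hL : ∀ q z : EuclideanSpace ℝ (Fin n),
      L (q + z) + L (q - z) - 2 * L q ≤ (1 / θ) * ‖z‖ ^ 2)
    (hu : ∀ x : EuclideanSpace ℝ (Fin n), ∀ t : ℝ, 0 < t →
      IsLeast (Set.range fun y : EuclideanSpace ℝ (Fin n) =>
        u₀ y + t * L (t⁻¹ • (x - y))) (u x t)) :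
    ∀ x z : EuclideanSpace ℝ (Fin n), ∀ t : ℝ, 0 < t →
      u (x + z) t + u (x - z) t - 2 * u x t ≤ ‖z‖ ^ 2 / (θ * t) := by
  intro x z t ht
  have hL' : SemiconcaveWith (1 / θ) L := hL
  have hcompetitor : ∀ y, SemiconcaveWith (t * (1 / θ * t⁻¹ ^ 2))
      (fun x => u₀ y + t * L (t⁻¹ • (x - y))) := fun y =>
    (((hL'.comp_smul t⁻¹).comp_sub_const y).const_mul ht.le).const_add (u₀ y)
  have hconst : t * (1 / θ * t⁻¹ ^ 2) = 1 / (θ * t) := by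
    field_simp
  have hu_t := SemiconcaveWith.of_isLeast_range hcompetitor (fun x => hu x t ht) x z
  rwa [hconst, one_div_mul_eq_div] at hu_t

theorem hopf_lax_semiconcavity
    (n : ℕ) (θ : ℝ) (hθ : 0 < θ)
    (u₀ L : EuclideanSpace ℝ (Fin n) → ℝ)
    (u : EuclideanSpace ℝ (Fin n) → ℝ → ℝ)
    (hL : ∀ q z : EuclideanSpace ℝ (Fin n),
      L (q + z) + L (q - z) - 2 * L q ≤ (1 / θ) * ‖z‖ ^ 2)
    (hu : ∀ x : EuclideanSpace ℝ (Fin n), ∀ t : ℝ, 0 < t →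
      IsLeast (Set.range fun y : EuclideanSpace ℝ (Fin n) =>
        u₀ y + t * L (t⁻¹ • (x - y))) (u x t)) :
    ∀ x z : EuclideanSpace ℝ (Fin n), ∀ t : ℝ, 0 < t →
      u (x + z) t + u (x - z) t - 2 * u x t ≤ ‖z‖ ^ 2 / (θ * t) :=
  hopf_lax_semiconcavity_general n θ u₀ L u hL hu
end

section
/- If H : ℝⁿ → ℝ is twice continuously differentiable and satisfies D²H(p) ξ·ξ ≥ θ|ξ|² for all p, ξ ∈ ℝⁿ with θ > 0 (uniform convexity), then its Legendre–Fenchel conjugate L(q) = sup_p (p·q - H(p)) is semiconcave with constant 1/θ: L(q+z) + L(q-z) - 2L(q) ≤ (1/θ)|z|² for all q, z ∈ ℝⁿ. -/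
/-! Along every line `t ↦ H (y + t • v)` the second derivative is at least `θ ‖v‖²`, so `H` is
`θ`-strongly convex; at the midpoint `m` of `p₁, p₂` this reads
`H p₁ + H p₂ - 2 H m ≥ θ/4 ‖p₁ - p₂‖²`. Hence
`(⟪p₁, q + z⟫ - H p₁) + (⟪p₂, q - z⟫ - H p₂) ≤ 2 (⟪m, q⟫ - H m) + ⟪p₁ - p₂, z⟫ - θ/4 ‖p₁ - p₂‖²`,
and by Young's inequality the last two terms are at most `‖z‖² / θ`. Taking suprema over `p₁` and
`p₂` gives the semiconcavity of the conjugate. -/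

open Set
open scoped RealInnerProductSpace

theorem strongConvexOn_univ_of_hasDerivAt_two {φ φ' φ'' : ℝ → ℝ} {m : ℝ}
    (hφ : ∀ t, HasDerivAt φ (φ' t) t) (hφ' : ∀ t, HasDerivAt φ' (φ'' t) t)
    (hφ'' : ∀ t, m ≤ φ'' t) : StrongConvexOn univ m φ := by
  rw [strongConvexOn_iff_convex]
  simp only [Real.norm_eq_abs, sq_abs]
  refine convexOn_of_hasDerivWithinAt2_nonneg (f' := fun t => φ' t - m * t)
    (f'' := fun t => φ'' t - m) convex_univ ?_ (fun t _ => ?_) (fun t _ => ?_)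
    (fun t _ => sub_nonneg.mpr (hφ'' t))
  · exact (continuous_iff_continuousAt.mpr fun t => (hφ t).continuousAt).continuousOn.sub
      (by fun_prop)
  · refine ((hφ t).sub ((hasDerivAt_pow 2 t).const_mul (m / 2))).hasDerivWithinAt.congr_deriv ?_
    ring
  · refine ((hφ' t).sub ((hasDerivAt_id t).const_mul m)).hasDerivWithinAt.congr_deriv ?_
    simp

section NormedSpace

variable {E : Type*} [NormedAddCommGroup E] [NormedSpace ℝ E]

theorem hasDerivAt_comp_add_smul {F : Type*} [NormedAddCommGroup F] [NormedSpace ℝ F]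
    {f : E → F} {y v : E} {t : ℝ} (hf : DifferentiableAt ℝ f (y + t • v)) :
    HasDerivAt (fun s : ℝ => f (y + s • v)) (fderiv ℝ f (y + t • v) v) t := by
  refine hf.hasFDerivAt.comp_hasDerivAt t ?_
  simpa using ((hasDerivAt_id t).smul_const v).const_add y

theorem strongConvexOn_univ_of_iteratedFDeriv_two_ge {f : E → ℝ} {m : ℝ} (hf : ContDiff ℝ 2 f)
    (hf₂ : ∀ x v, m * ‖v‖ ^ 2 ≤ iteratedFDeriv ℝ 2 f x ![v, v]) :
    StrongConvexOn univ m f := by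
  refine ⟨convex_univ, fun x _ y _ a b ha hb hab => ?_⟩
  have hdf : Differentiable ℝ (fderiv ℝ f) :=
    (hf.fderiv_right (m := 1) le_rfl).differentiable one_ne_zero
  have hline : StrongConvexOn univ (m * ‖x - y‖ ^ 2) fun t : ℝ => f (y + t • (x - y)) :=
    strongConvexOn_univ_of_hasDerivAt_two
      (fun t => hasDerivAt_comp_add_smul (hf.differentiable two_ne_zero _))
      (fun t => (hasDerivAt_comp_add_smul (hdf _)).clm_apply (hasDerivAt_const t _))
      (fun t => by simpa [iteratedFDeriv_two_apply] using hf₂ (y + t • (x - y)) (x - y))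
  have key := hline.2 (mem_univ 1) (mem_univ 0) ha hb hab
  obtain rfl : a = 1 - b := eq_sub_of_add_eq hab
  simp only [smul_eq_mul, mul_one, mul_zero, add_zero, one_smul, zero_smul, sub_zero,
    norm_one, one_pow] at key
  rw [show y + (1 - b) • (x - y) = (1 - b) • x + b • y by module, add_sub_cancel] at key
  simp only [smul_eq_mul]
  linarith

end NormedSpace

section InnerProductSpace

variable {E : Type*} [NormedAddCommGroup E] [InnerProductSpace ℝ E]

/-- The Legendre–Fenchel conjugate; it is the junk value `0` wherever the supremum is infinite. -/
noncomputable def fenchelConjugate (H : E → ℝ) (q : E) : ℝ :=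
  ⨆ p, ⟪p, q⟫ - H p

theorem StrongConvexOn.inner_sub_add_inner_sub_le {H : E → ℝ} {θ : ℝ} (hθ : 0 < θ)
    (hH : StrongConvexOn univ θ H) (p₁ p₂ q z : E) :
    (⟪p₁, q + z⟫ - H p₁) + (⟪p₂, q - z⟫ - H p₂) ≤
      2 * (⟪midpoint ℝ p₁ p₂, q⟫ - H (midpoint ℝ p₁ p₂)) + 1 / θ * ‖z‖ ^ 2 := by
  have hmid : midpoint ℝ p₁ p₂ = (1 / 2 : ℝ) • p₁ + (1 / 2 : ℝ) • p₂ := by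
    rw [midpoint_eq_smul_add, smul_add]; norm_num
  have hstrong : θ / 4 * ‖p₁ - p₂‖ ^ 2 ≤ H p₁ + H p₂ - 2 * H (midpoint ℝ p₁ p₂) := by
    have := hH.2 (mem_univ p₁) (mem_univ p₂) (by norm_num : (0 : ℝ) ≤ 1 / 2)
      (by norm_num : (0 : ℝ) ≤ 1 / 2) (by norm_num)
    rw [← hmid, smul_eq_mul, smul_eq_mul] at this
    linarith
  have hinner : 2 * ⟪midpoint ℝ p₁ p₂, q⟫ = ⟪p₁, q⟫ + ⟪p₂, q⟫ := by
    rw [hmid, inner_add_left, real_inner_smul_left, real_inner_smul_left]; ring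
  have hcs : ⟪p₁, z⟫ - ⟪p₂, z⟫ ≤ ‖p₁ - p₂‖ * ‖z‖ :=
    inner_sub_left (𝕜 := ℝ) p₁ p₂ z ▸ real_inner_le_norm _ _
  have hyoung : ‖p₁ - p₂‖ * ‖z‖ ≤ θ / 4 * ‖p₁ - p₂‖ ^ 2 + 1 / θ * ‖z‖ ^ 2 := by
    have hsq : θ / 4 * ‖p₁ - p₂‖ ^ 2 + 1 / θ * ‖z‖ ^ 2 - ‖p₁ - p₂‖ * ‖z‖ =
        (θ * ‖p₁ - p₂‖ - 2 * ‖z‖) ^ 2 / (4 * θ) := by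
      field_simp; ring
    linarith [hsq ▸ (by positivity : 0 ≤ (θ * ‖p₁ - p₂‖ - 2 * ‖z‖) ^ 2 / (4 * θ))]
  rw [inner_add_right, inner_sub_right]
  linarith

theorem StrongConvexOn.fenchelConjugate_add_add_sub_le {H : E → ℝ} {θ : ℝ} (hθ : 0 < θ)
    (hH : StrongConvexOn univ θ H) {q : E} (hq : BddAbove (range fun p => ⟪p, q⟫ - H p))
    (z : E) :
    fenchelConjugate H (q + z) + fenchelConjugate H (q - z) - 2 * fenchelConjugate H q ≤
      1 / θ * ‖z‖ ^ 2 := by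
  rw [sub_le_iff_le_add']
  exact ciSup_add_ciSup_le fun p₁ p₂ =>
    (hH.inner_sub_add_inner_sub_le hθ p₁ p₂ q z).trans <| by
      gcongr
      exact le_ciSup hq _

end InnerProductSpace

theorem legendre_conjugate_semiconcave
    (n : ℕ) (θ : ℝ) (hθ : 0 < θ)
    (H : EuclideanSpace ℝ (Fin n) → ℝ)
    (hH : ContDiff ℝ 2 H)
    (hconv : ∀ p ξ : EuclideanSpace ℝ (Fin n),
      θ * ‖ξ‖ ^ 2 ≤ iteratedFDeriv ℝ 2 H p ![ξ, ξ])
    (hbdd : ∀ q : EuclideanSpace ℝ (Fin n),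
      BddAbove (Set.range fun p : EuclideanSpace ℝ (Fin n) =>
        (inner ℝ p q : ℝ) - H p))
    (L : EuclideanSpace ℝ (Fin n) → ℝ)
    (hL : L = fun q => ⨆ p : EuclideanSpace ℝ (Fin n), (inner ℝ p q : ℝ) - H p) :
    ∀ q z : EuclideanSpace ℝ (Fin n),
      L (q + z) + L (q - z) - 2 * L q ≤ (1 / θ) * ‖z‖ ^ 2 := by
  subst hL
  intro q z
  exact (strongConvexOn_univ_of_iteratedFDeriv_two_ge hH hconv).fenchelConjugate_add_add_sub_le
    hθ (hbdd q) z
end
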